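/- For every n ≥ 2, the number of ascent sequences of length n avoiding the pattern 210 and having exactly one ascent equals binom(n, 2). -/

import Mathlib

/-- Number of ascents of a sequence of non-negative integers:
indices `j` with `x j < x (j+1)`. -/
def ascents (l : List ℕ) : ℕ :=
  ((l.zip l.tail).filter (fun p => p.1 < p.2)).length

/-- `x` is an ascent sequence: it starts with 0 and each subsequent letter is at most
one more than the number of ascents of the preceding prefix. -/
def IsAscentSeq (x : List ℕ) : Prop :=
  (∀ h : 0 < x.length, x.get ⟨0, h⟩ = 0) ∧
  ∀ i : Fin x.length, 0 < (i : ℕ) → x.get i ≤ ascents (x.take (i : ℕ)) + 1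

/-- `p` contains the pattern `t`: `p` has a subsequence order-isomorphic to `t`. -/
def Contains (p t : List ℕ) : Prop :=
  ∃ f : Fin t.length → Fin p.length, StrictMono f ∧
    ∀ i j : Fin t.length, t.get i < t.get j ↔ p.get (f i) < p.get (f j)

/-- `p` avoids the pattern `t`. -/
def Avoids (p t : List ℕ) : Prop := ¬ Contains p t

/-!
A letter of an ascent sequence exceeds the number of ascents before it by at most one, so the
first letter `≥ 2` would need an ascent before it and then create a second one. Hence an ascent
sequence with exactly one ascent is a word `0^(a+1) 1^(b+1) 0^c`, which cannot contain `210`.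
Such words of length `n` are indexed by the pairs `i < j < n`, of which there are `C(n, 2)`.
-/

open List

@[simp] theorem ascents_singleton (a : ℕ) : ascents [a] = 0 := rfl

theorem ascents_cons_cons (a b : ℕ) (l : List ℕ) :
    ascents (a :: b :: l) = ascents (b :: l) + if a < b then 1 else 0 := by
  by_cases h : a < b <;> simp [ascents, h, Nat.add_comm]

theorem ascents_le_ascents_cons (a : ℕ) (l : List ℕ) : ascents l ≤ ascents (a :: l) := by
  cases l with
  | nil => rfl
  | cons b l => rw [ascents_cons_cons]; omega

theorem ascents_le_ascents_append :
    ∀ l₁ l₂ : List ℕ, ascents l₁ ≤ ascents (l₁ ++ l₂)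
  | [], _ | [_], _ => Nat.zero_le _
  | a :: b :: l, l₂ => by
    have := ascents_le_ascents_append (b :: l) l₂
    simp only [cons_append, ascents_cons_cons] at this ⊢
    omega

theorem List.IsPrefix.ascents_le {l₁ l₂ : List ℕ} (h : l₁ <+: l₂) :
    ascents l₁ ≤ ascents l₂ := by
  obtain ⟨t, rfl⟩ := h
  exact ascents_le_ascents_append l₁ t

theorem ascents_append_pair (u v : ℕ) : ∀ l : List ℕ,
    ascents (l ++ [u, v]) = ascents (l ++ [u]) + if u < v then 1 else 0
  | [] => by simp [ascents_cons_cons]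
  | [a] => by simp [ascents_cons_cons, Nat.add_comm]
  | a :: b :: l => by
    have := ascents_append_pair u v (b :: l)
    simp only [cons_append, ascents_cons_cons] at this ⊢
    omega

theorem ascents_replicate_append (k v : ℕ) (l : List ℕ) :
    ascents (replicate (k + 1) v ++ l) = ascents (v :: l) := by
  induction k with
  | zero => rfl
  | succ k ih =>
    rw [replicate_succ, cons_append, ← ih, replicate_succ, cons_append, ascents_cons_cons]
    simp

theorem ascents_replicate (k v : ℕ) : ascents (replicate k v) = 0 := by
  cases k with
  | zero => rfl
  | succ k => simpa using ascents_replicate_append k v []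

def zerosOnesZeros (a b c : ℕ) : List ℕ :=
  replicate (a + 1) 0 ++ replicate (b + 1) 1 ++ replicate c 0

theorem length_zerosOnesZeros (a b c : ℕ) :
    (zerosOnesZeros a b c).length = a + b + c + 2 := by
  simp [zerosOnesZeros]
  omega

theorem ascents_zerosOnesZeros (a b c : ℕ) : ascents (zerosOnesZeros a b c) = 1 := by
  rw [zerosOnesZeros, append_assoc, ascents_replicate_append, replicate_succ, cons_append,
    ascents_cons_cons, ← cons_append, ← replicate_succ, ascents_replicate_append]
  cases c with
  | zero => rfl
  | succ c => rw [replicate_succ, ascents_cons_cons, ← replicate_succ, ascents_replicate]; rfl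

theorem zerosOnesZeros_inj {a b c a' b' c' : ℕ} :
    zerosOnesZeros a b c = zerosOnesZeros a' b' c' ↔ a = a' ∧ b = b' ∧ c = c' := by
  refine ⟨fun h => ?_, by rintro ⟨rfl, rfl, rfl⟩; rfl⟩
  have hzeros := congrArg (fun l => (l.takeWhile (· == 0)).length) h
  have hones := congrArg (count 1) h
  have hlen := congrArg length h
  simp [zerosOnesZeros, replicate_succ, count_replicate] at hzeros hones hlen
  omega

theorem exists_eq_replicate_of_ascents_eq_zero :
    ∀ l : List ℕ, (∀ v ∈ l, v ≤ 1) → ascents l = 0 →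
      ∃ q r, l = replicate q 1 ++ replicate r 0
  | [], _, _ => ⟨0, 0, rfl⟩
  | y :: t, hl, h => by
    obtain ⟨q, r, rfl⟩ := exists_eq_replicate_of_ascents_eq_zero t
      (fun v hv => hl v (mem_cons_of_mem y hv))
      (Nat.eq_zero_of_le_zero (h ▸ ascents_le_ascents_cons y t))
    have hy : y ≤ 1 := hl y mem_cons_self
    obtain rfl | rfl : y = 0 ∨ y = 1 := by omega
    · cases q with
      | zero => exact ⟨0, r + 1, rfl⟩
      | succ q => simp [replicate_succ, ascents_cons_cons] at h
    · exact ⟨q + 1, r, rfl⟩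

theorem exists_eq_zerosOnesZeros_of_ascents_eq_one :
    ∀ l : List ℕ, (∀ v ∈ l, v ≤ 1) → ascents (0 :: l) = 1 →
      ∃ a b c, 0 :: l = zerosOnesZeros a b c
  | [], _, h => absurd h zero_ne_one
  | y :: t, hl, h => by
    have hy : y ≤ 1 := hl y mem_cons_self
    have ht : ∀ v ∈ t, v ≤ 1 := fun v hv => hl v (mem_cons_of_mem y hv)
    rw [ascents_cons_cons] at h
    obtain rfl | rfl : y = 0 ∨ y = 1 := by omega
    · obtain ⟨a, b, c, habc⟩ :=
        exists_eq_zerosOnesZeros_of_ascents_eq_one t ht (by simpa using h)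
      exact ⟨a + 1, b, c, by rw [habc]; rfl⟩
    · obtain ⟨q, r, hqr⟩ :=
        exists_eq_replicate_of_ascents_eq_zero (1 :: t) (by simpa [ht]) (by simpa using h)
      cases q with
      | zero => simp [eq_replicate_iff] at hqr
      | succ b => exact ⟨0, b, r, by rw [hqr]; rfl⟩

theorem IsAscentSeq.forall_le_one_of_ascents_le_one {x : List ℕ} (hx : IsAscentSeq x)
    (h : ascents x ≤ 1) : ∀ v ∈ x, v ≤ 1 := by
  suffices hget : ∀ k (hk : k < x.length), x[k] ≤ 1 by
    intro v hv
    obtain ⟨k, hk, rfl⟩ := getElem_of_mem hv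
    exact hget k hk
  intro k
  induction k with
  | zero => exact fun hk => (hx.1 hk).trans_le zero_le_one
  | succ k ih =>
    intro hk
    by_contra! hbig
    have hprev : x[k] ≤ 1 := ih (by omega)
    have hbefore : 1 ≤ ascents (x.take (k + 1)) := by
      have := hx.2 ⟨k + 1, hk⟩ k.succ_pos
      simp only [get_eq_getElem] at this
      omega
    have hstep : ascents (x.take (k + 2)) = ascents (x.take (k + 1)) + 1 := by
      rw [take_succ_eq_append_getElem hk, take_succ_eq_append_getElem (by omega), append_assoc,
        singleton_append, ascents_append_pair, if_pos (by omega)]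
    have := (take_prefix (k + 2) x).ascents_le
    omega

theorem isAscentSeq_zerosOnesZeros (a b c : ℕ) : IsAscentSeq (zerosOnesZeros a b c) := by
  refine ⟨fun _ => rfl, fun i _ => ?_⟩
  have hle : ∀ v ∈ zerosOnesZeros a b c, v ≤ 1 := by
    simp only [zerosOnesZeros, mem_append, mem_replicate]
    omega
  exact (hle _ (get_mem _ i)).trans (Nat.le_add_left 1 _)

theorem isAscentSeq_and_ascents_eq_one_iff {x : List ℕ} :
    IsAscentSeq x ∧ ascents x = 1 ↔ ∃ a b c, x = zerosOnesZeros a b c := by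
  constructor
  · rintro ⟨hx, h⟩
    obtain _ | ⟨y, t⟩ := x
    · exact absurd h zero_ne_one
    obtain rfl : y = 0 := hx.1 (by simp)
    exact exists_eq_zerosOnesZeros_of_ascents_eq_one t
      (fun v hv => hx.forall_le_one_of_ascents_le_one h.le v (mem_cons_of_mem 0 hv)) h
  · rintro ⟨a, b, c, rfl⟩
    exact ⟨isAscentSeq_zerosOnesZeros a b c, ascents_zerosOnesZeros a b c⟩

theorem avoids_210_of_forall_le_one {x : List ℕ} (hx : ∀ v ∈ x, v ≤ 1) :
    Avoids x [2, 1, 0] := by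
  rintro ⟨f, -, hf⟩
  have h10 := (hf 1 0).mp (by decide)
  have h21 := (hf 2 1).mp (by decide)
  have := hx _ (get_mem x (f 0))
  omega

/-- For `i < j < n`: the word of length `n` whose `1`s sit exactly at positions `i+1, …, j`. -/
def intervalWord (n : ℕ) (p : ℕ × ℕ) : List ℕ :=
  zerosOnesZeros p.1 (p.2 - p.1 - 1) (n - 1 - p.2)

theorem intervalWord_injOn (n : ℕ) : Set.InjOn (intervalWord n) {p | p.1 < p.2} := by
  rintro ⟨i, j⟩ hij ⟨i', j'⟩ hij' h
  obtain ⟨rfl, hb, -⟩ := zerosOnesZeros_inj.mp h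
  simp only [Set.mem_ofPred_eq] at hij hij'
  simp only [Prod.mk.injEq, true_and]
  omega

theorem setOf_avoids_210_ascents_eq_one_eq_image (n : ℕ) :
    {x : List ℕ | x.length = n ∧ IsAscentSeq x ∧ Avoids x [2, 1, 0] ∧ ascents x = 1} =
      ({p ∈ Finset.range n ×ˢ Finset.range n | p.1 < p.2}.image (intervalWord n) :
        Set (List ℕ)) := by
  ext x
  simp only [Set.mem_ofPred_eq, Finset.coe_image, Set.mem_image, Finset.mem_coe,
    Finset.mem_filter, Finset.mem_product, Finset.mem_range]
  constructor
  · rintro ⟨hlen, hx, -, h⟩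
    obtain ⟨a, b, c, rfl⟩ := isAscentSeq_and_ascents_eq_one_iff.mp ⟨hx, h⟩
    rw [length_zerosOnesZeros] at hlen
    exact ⟨(a, a + b + 1), by omega, zerosOnesZeros_inj.mpr ⟨rfl, by omega, by omega⟩⟩
  · rintro ⟨⟨i, j⟩, hij, rfl⟩
    obtain ⟨hx, h⟩ := isAscentSeq_and_ascents_eq_one_iff.mpr ⟨_, _, _, rfl⟩
    exact ⟨by simp only [intervalWord, length_zerosOnesZeros]; omega, hx,
      avoids_210_of_forall_le_one (hx.forall_le_one_of_ascents_le_one h.le), h⟩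

theorem count_210_one_ascent_general (n : ℕ) :
    {x : List ℕ | x.length = n ∧ IsAscentSeq x ∧ Avoids x [2, 1, 0] ∧
      ascents x = 1}.ncard = n.choose 2 := by
  rw [setOf_avoids_210_ascents_eq_one_eq_image, Set.ncard_coe_finset,
    Finset.card_image_of_injOn, Finset.card_product_filter_lt, Finset.card_range]
  exact (intervalWord_injOn n).mono fun p hp => (Finset.mem_filter.mp hp).2

/-- For `n ≥ 2`, the number of 210-avoiding ascent sequences of length `n` with
exactly one ascent is `C(n, 2)`. -/
theorem count_210_one_ascent (n : ℕ) (hn : 2 ≤ n) :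
    {x : List ℕ | x.length = n ∧ IsAscentSeq x ∧ Avoids x [2, 1, 0] ∧
      ascents x = 1}.ncard = n.choose 2 :=
  count_210_one_ascent_general n
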